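/- In F[[z]], Heine's continued fraction holds: ₂φ₁(aq,b;cq;q,z) / ₂φ₁(a,b;c;q,z) = 1/(1 − β_1 z/(1 − β_2 z/(1 − β_3 z/(1 − ⋯)))), where β_{2n+1} := (1 − bq^n)(a − cq^n)q^n / ((1 − cq^{2n})(1 − cq^{2n+1})) for n ≥ 0 and β_{2n} := (1 − aq^n)(b − cq^n)q^{n−1} / ((1 − cq^{2n−1})(1 − cq^{2n})) for n ≥ 1. -/

import Mathlib

noncomputable section

/-- `F`, the fraction field of `ℚ[q,a,b,c]`. -/
abbrev F : Type := FractionRing (MvPolynomial (Fin 4) ℚ)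

def qv : F := algebraMap (MvPolynomial (Fin 4) ℚ) F (MvPolynomial.X 0)
def av : F := algebraMap (MvPolynomial (Fin 4) ℚ) F (MvPolynomial.X 1)
def bv : F := algebraMap (MvPolynomial (Fin 4) ℚ) F (MvPolynomial.X 2)
def cv : F := algebraMap (MvPolynomial (Fin 4) ℚ) F (MvPolynomial.X 3)

/-- The q-Pochhammer symbol `(u;q)_n`. -/
def qPoch (u : F) (n : ℕ) : F := ∏ j ∈ Finset.range n, (1 - u * qv ^ j)

/-- The basic hypergeometric series `₂φ₁(A,B;C;q,z) ∈ F[[z]]`. -/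
def phi2 (A B C : F) : PowerSeries F :=
  PowerSeries.mk fun n => qPoch A n * qPoch B n / (qPoch qv n * qPoch C n)

/-- Heine's coefficients: `β_{2n+1} = (1−bq^n)(a−cq^n)q^n/((1−cq^{2n})(1−cq^{2n+1}))`
for `n ≥ 0` and `β_{2n} = (1−aq^n)(b−cq^n)q^{n−1}/((1−cq^{2n−1})(1−cq^{2n}))` for
`n ≥ 1`. -/
def betaS (m : ℕ) : F :=
  if m % 2 = 1 then
    (1 - bv * qv ^ (m / 2)) * (av - cv * qv ^ (m / 2)) * qv ^ (m / 2) /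
      ((1 - cv * qv ^ ((m : ℤ) - 1)) * (1 - cv * qv ^ m))
  else
    (1 - av * qv ^ (m / 2)) * (bv - cv * qv ^ (m / 2)) * qv ^ ((m : ℤ) / 2 - 1) /
      ((1 - cv * qv ^ ((m : ℤ) - 1)) * (1 - cv * qv ^ m))

/-- The depth-`N` convergent of the Stieltjes-type continued fraction
`1/(1 − β_1 z/(1 − β_2 z/(⋯ − β_N z/1)))`: `convS β N k` is the tail whose outermost
numerator is `β_{N-k+1}` (with `convS β N 0 = 1`), so the convergent is `convS β N N`. -/
def convS (beta : ℕ → F) (N : ℕ) : ℕ → PowerSeries F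
  | 0 => 1
  | k + 1 => (1 - PowerSeries.C (beta (N - k)) * PowerSeries.X * convS beta N k)⁻¹

/-!
Heine's contiguous relation
`₂φ₁(A,B;C) = ₂φ₁(Aq,B;Cq) − (1−B)(A−C)/((1−C)(1−Cq)) · z · ₂φ₁(Aq,Bq;Cq²)`,
applied alternately to `(A,B) = (aqⁿ,bqⁿ)` and, by the symmetry in `A,B`, to `(bqⁿ,aqⁿ⁺¹)`,
gives the three-term recurrence `G_m = G_{m+1} − β_{m+1} z G_{m+2}` along the ladder
`G_0 = ₂φ₁(a,b;c), G_1 = ₂φ₁(aq,b;cq), G_2 = ₂φ₁(aq,bq;cq²), …`.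
Hence `R_m = G_{m+1}/G_m` satisfies `R_m = 1/(1 − β_{m+1} z R_{m+1})`. Replacing a tail by
a series that agrees with it modulo `z^k` changes `1/(1 − β z ·)` only modulo `z^{k+1}`, so
starting from the tail `1` at depth `N`, the convergent agrees with `R_0` modulo `z^N`.
-/

open PowerSeries

lemma one_sub_X_mul_qv_pow_ne_zero (i : Fin 4) (k : ℕ) :
    (1 : F) - algebraMap (MvPolynomial (Fin 4) ℚ) F (MvPolynomial.X i) * qv ^ k ≠ 0 := by
  rw [qv, ← map_pow, ← map_mul, ← map_one (algebraMap (MvPolynomial (Fin 4) ℚ) F), ← map_sub, Ne,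
    IsFractionRing.to_map_eq_zero_iff]
  intro h
  simpa using congrArg MvPolynomial.constantCoeff h

lemma one_sub_mul_qv_mul_qv_pow_ne_zero {C : F} (hC : ∀ j : ℕ, (1 : F) - C * qv ^ j ≠ 0)
    (j : ℕ) : (1 : F) - C * qv * qv ^ j ≠ 0 := by
  simpa [mul_assoc, pow_succ'] using hC (j + 1)

lemma one_sub_cv_mul_qv_pow_ne_zero (s : ℕ) (j : ℕ) : (1 : F) - cv * qv ^ s * qv ^ j ≠ 0 := by
  rw [mul_assoc, ← pow_add]
  exact one_sub_X_mul_qv_pow_ne_zero 3 (s + j)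

lemma qPoch_succ (u : F) (n : ℕ) : qPoch u (n + 1) = qPoch u n * (1 - u * qv ^ n) :=
  Finset.prod_range_succ _ _

lemma qPoch_succ' (u : F) (n : ℕ) : qPoch u (n + 1) = (1 - u) * qPoch (u * qv) n := by
  simp only [qPoch, Finset.prod_range_succ', pow_zero, mul_one, pow_succ', ← mul_assoc, mul_comm]

lemma qPoch_ne_zero {u : F} (hu : ∀ j : ℕ, (1 : F) - u * qv ^ j ≠ 0) (n : ℕ) : qPoch u n ≠ 0 :=
  Finset.prod_ne_zero_iff.mpr fun j _ => hu j

lemma coeff_phi2 (A B C : F) (n : ℕ) :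
    coeff n (phi2 A B C) = qPoch A n * qPoch B n / (qPoch qv n * qPoch C n) :=
  coeff_mk _ _

lemma constantCoeff_phi2 (A B C : F) : constantCoeff (phi2 A B C) = 1 := by
  simp [phi2, qPoch]

lemma phi2_comm (A B C : F) : phi2 A B C = phi2 B A C := by
  ext n
  rw [coeff_phi2, coeff_phi2, mul_comm (qPoch A n)]

theorem phi2_contiguous (A B C : F) (hC : ∀ j : ℕ, (1 : F) - C * qv ^ j ≠ 0) :
    phi2 A B C = phi2 (A * qv) B (C * qv)
      - PowerSeries.C ((1 - B) * (A - C) / ((1 - C) * (1 - C * qv)))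
        * X * phi2 (A * qv) (B * qv) (C * qv * qv) := by
  ext (_ | n)
  · simp [phi2, qPoch]
  rw [map_sub, mul_right_comm _ X, coeff_succ_mul_X, coeff_C_mul, coeff_phi2, coeff_phi2,
    coeff_phi2, qPoch_succ' A, qPoch_succ' B, qPoch_succ' C, qPoch_succ (A * qv), qPoch_succ qv,
    qPoch_succ (C * qv)]
  have hC' := one_sub_mul_qv_mul_qv_pow_ne_zero hC
  have hq : qPoch qv n ≠ 0 := qPoch_ne_zero (one_sub_X_mul_qv_pow_ne_zero 0) n
  have hqn : (1 : F) - qv * qv ^ n ≠ 0 := one_sub_X_mul_qv_pow_ne_zero 0 n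
  have hY : qPoch (C * qv) n ≠ 0 := qPoch_ne_zero hC' n
  have h0 : (1 : F) - C ≠ 0 := by simpa using hC 0
  have h1 : (1 : F) - C * qv ≠ 0 := by simpa using hC 1
  have hn : (1 : F) - C * qv * qv ^ n ≠ 0 := hC' n
  have hCq : (1 - C * qv) * qPoch (C * qv * qv) n = qPoch (C * qv) n * (1 - C * qv * qv ^ n) := by
    rw [← qPoch_succ', qPoch_succ]
  have hlast : qPoch (A * qv) n * qPoch (B * qv) n / (qPoch qv n * qPoch (C * qv * qv) n)
      = qPoch (A * qv) n * qPoch (B * qv) n * (1 - C * qv) /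
        (qPoch qv n * qPoch (C * qv) n * (1 - C * qv * qv ^ n)) := by
    rw [div_eq_div_iff (mul_ne_zero hq (qPoch_ne_zero (one_sub_mul_qv_mul_qv_pow_ne_zero hC') n))
      (by positivity)]
    linear_combination -(qPoch (A * qv) n * qPoch (B * qv) n * qPoch qv n) * hCq
  rw [hlast, div_mul_div_comm, div_sub_div _ _ (by positivity) (by positivity),
    div_eq_div_iff (by positivity) (by positivity)]
  ring

lemma betaS_two_mul_add_one (n : ℕ) :
    betaS (2 * n + 1) = (1 - bv * qv ^ n) * (av - cv * qv ^ n) * qv ^ n /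
      ((1 - cv * qv ^ (2 * n)) * (1 - cv * qv ^ (2 * n + 1))) := by
  have hdiv : (2 * n + 1) / 2 = n := by omega
  have hexp : ((2 * n + 1 : ℕ) : ℤ) - 1 = ((2 * n : ℕ) : ℤ) := by push_cast; ring
  rw [betaS, if_pos (by omega), hdiv, hexp, zpow_natCast]

lemma betaS_two_mul_add_two (n : ℕ) :
    betaS (2 * n + 2) = (1 - av * qv ^ (n + 1)) * (bv - cv * qv ^ (n + 1)) * qv ^ n /
      ((1 - cv * qv ^ (2 * n + 1)) * (1 - cv * qv ^ (2 * n + 2))) := by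
  have hdiv : (2 * n + 2) / 2 = n + 1 := by omega
  have hexp : ((2 * n + 2 : ℕ) : ℤ) / 2 - 1 = ((n : ℕ) : ℤ) := by push_cast; omega
  have hexp' : ((2 * n + 2 : ℕ) : ℤ) - 1 = ((2 * n + 1 : ℕ) : ℤ) := by push_cast; ring
  rw [betaS, if_neg (by omega), hdiv, hexp, hexp', zpow_natCast, zpow_natCast]

def heineLadder (m : ℕ) : F⟦X⟧ :=
  phi2 (av * qv ^ ((m + 1) / 2)) (bv * qv ^ (m / 2)) (cv * qv ^ m)

lemma heineLadder_two_mul (n : ℕ) :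
    heineLadder (2 * n) = phi2 (av * qv ^ n) (bv * qv ^ n) (cv * qv ^ (2 * n)) := by
  rw [heineLadder, show (2 * n + 1) / 2 = n by omega, show 2 * n / 2 = n by omega]

lemma heineLadder_two_mul_add_one (n : ℕ) :
    heineLadder (2 * n + 1) = phi2 (av * qv ^ (n + 1)) (bv * qv ^ n) (cv * qv ^ (2 * n + 1)) := by
  rw [heineLadder, show (2 * n + 1 + 1) / 2 = n + 1 by omega, show (2 * n + 1) / 2 = n by omega]

lemma constantCoeff_heineLadder (m : ℕ) : constantCoeff (heineLadder m) = 1 :=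
  constantCoeff_phi2 _ _ _

lemma heineLadder_rec_even (n : ℕ) :
    heineLadder (2 * n) = heineLadder (2 * n + 1)
      - PowerSeries.C (betaS (2 * n + 1)) * X * heineLadder (2 * n + 2) := by
  rw [heineLadder_two_mul, heineLadder_two_mul_add_one, show 2 * n + 2 = 2 * (n + 1) by ring,
    heineLadder_two_mul, betaS_two_mul_add_one]
  convert phi2_contiguous (av * qv ^ n) (bv * qv ^ n) (cv * qv ^ (2 * n))
    (one_sub_cv_mul_qv_pow_ne_zero (2 * n)) using 3 <;> ring_nf

lemma heineLadder_rec_odd (n : ℕ) :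
    heineLadder (2 * n + 1) = heineLadder (2 * n + 2)
      - PowerSeries.C (betaS (2 * n + 2)) * X * heineLadder (2 * n + 3) := by
  rw [heineLadder_two_mul_add_one, show 2 * n + 2 = 2 * (n + 1) by ring,
    show 2 * n + 3 = 2 * (n + 1) + 1 by ring, heineLadder_two_mul, heineLadder_two_mul_add_one,
    ← show 2 * n + 2 = 2 * (n + 1) by ring, betaS_two_mul_add_two, phi2_comm _ (bv * qv ^ n),
    phi2_comm (av * qv ^ (n + 1)), phi2_comm (av * qv ^ (n + 1 + 1))]
  convert phi2_contiguous (bv * qv ^ n) (av * qv ^ (n + 1)) (cv * qv ^ (2 * n + 1))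
    (one_sub_cv_mul_qv_pow_ne_zero (2 * n + 1)) using 3 <;> ring_nf

lemma heineLadder_rec (m : ℕ) :
    heineLadder m = heineLadder (m + 1)
      - PowerSeries.C (betaS (m + 1)) * X * heineLadder (m + 2) := by
  obtain ⟨n, rfl | rfl⟩ := Nat.even_or_odd' m
  · exact heineLadder_rec_even n
  · exact heineLadder_rec_odd n

lemma mul_inv_eq_inv_one_sub_C_mul_X_mul {K : Type*} [Field K] {u v w : K⟦X⟧} (β : K)
    (hu : constantCoeff u ≠ 0) (hv : constantCoeff v ≠ 0) (h : u = v - PowerSeries.C β * X * w) :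
    v * u⁻¹ = (1 - PowerSeries.C β * X * (w * v⁻¹))⁻¹ := by
  have hvv : v * v⁻¹ = 1 := PowerSeries.mul_inv_cancel v hv
  have hden : 1 - PowerSeries.C β * X * (w * v⁻¹) = u * v⁻¹ := by
    rw [h, sub_mul, hvv]; ring
  rw [hden, PowerSeries.eq_inv_iff_mul_eq_one (by simpa [constantCoeff_inv] using ⟨hu, hv⟩)]
  calc v * u⁻¹ * (u * v⁻¹) = (u * u⁻¹) * (v * v⁻¹) := by ring
    _ = 1 := by rw [PowerSeries.mul_inv_cancel u hu, hvv, one_mul]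

lemma X_pow_succ_dvd_inv_sub_inv {K : Type*} [Field K] (β : K) {f g : K⟦X⟧} {k : ℕ}
    (h : X ^ k ∣ f - g) :
    X ^ (k + 1) ∣ (1 - PowerSeries.C β * X * f)⁻¹ - (1 - PowerSeries.C β * X * g)⁻¹ := by
  set u := 1 - PowerSeries.C β * X * f
  set v := 1 - PowerSeries.C β * X * g
  have hu : u * u⁻¹ = 1 := PowerSeries.mul_inv_cancel u (by simp [u])
  have hv : v * v⁻¹ = 1 := PowerSeries.mul_inv_cancel v (by simp [v])
  have hdiff : u⁻¹ - v⁻¹ = u⁻¹ * v⁻¹ * PowerSeries.C β * (X * (f - g)) := by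
    calc u⁻¹ - v⁻¹ = u⁻¹ * (v * v⁻¹) - (u * u⁻¹) * v⁻¹ := by rw [hu, hv, mul_one, one_mul]
      _ = _ := by simp only [u, v]; ring
  rw [hdiff, pow_succ']
  exact dvd_mul_of_dvd_right (mul_dvd_mul_left X h) _

lemma X_pow_dvd_sub_convS (β : ℕ → F) (R : ℕ → F⟦X⟧)
    (hR : ∀ m, R m = (1 - PowerSeries.C (β (m + 1)) * X * R (m + 1))⁻¹) (k m : ℕ) :
    X ^ k ∣ R m - convS β (m + k) k := by
  induction k generalizing m with
  | zero => simp [convS]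
  | succ k ih =>
    have hconv : convS β (m + (k + 1)) (k + 1)
        = (1 - PowerSeries.C (β (m + 1)) * X * convS β (m + 1 + k) k)⁻¹ := by
      rw [convS, show m + (k + 1) - k = m + 1 by omega, show m + (k + 1) = m + 1 + k by omega]
    rw [hconv, hR m]
    exact X_pow_succ_dvd_inv_sub_inv _ (ih (m + 1))

/-- Lemma 6.3 (Heine's continued fraction): `₂φ₁(aq,b;cq;q,z)/₂φ₁(a,b;c;q,z)` agrees
with the depth-`N` convergent of `1/(1 − β_1 z/(1 − β_2 z/(1 − ⋯)))` modulo `z^N`, for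
every `N ≥ 1`. -/
theorem heine_continued_fraction :
    ∀ N : ℕ, 1 ≤ N → ∀ i < N,
      PowerSeries.coeff i (phi2 (av * qv) bv (cv * qv) * (phi2 av bv cv)⁻¹)
        = PowerSeries.coeff i (convS betaS N N) := by
  intro N _ i hi
  set R : ℕ → F⟦X⟧ := fun m => heineLadder (m + 1) * (heineLadder m)⁻¹
  have hR : ∀ m, R m = (1 - PowerSeries.C (betaS (m + 1)) * X * R (m + 1))⁻¹ := fun m =>
    mul_inv_eq_inv_one_sub_C_mul_X_mul _ (by simp [constantCoeff_heineLadder])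
      (by simp [constantCoeff_heineLadder]) (heineLadder_rec m)
  have hR0 : phi2 (av * qv) bv (cv * qv) * (phi2 av bv cv)⁻¹ = R 0 := by
    simp [R, heineLadder]
  have hdvd := X_pow_dvd_sub_convS betaS R hR N 0
  rw [zero_add] at hdvd
  rw [hR0, ← sub_eq_zero, ← map_sub]
  exact X_pow_dvd_iff.mp hdvd i hi

end
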